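/- Let σ ∈ {0,+,-}^n be a nonzero sign vector with varbar(σ) ≤ k-1, where k < n. Then there exists a nonzero sign vector τ ≤ σ, obtained from σ by setting some components to zero, such that varbar(τ) = k and the first nonzero component of alt(τ) is +. -/

import Mathlib

open scoped BigOperators

/-- Number of sign changes between consecutive entries of a list of reals. -/
noncomputable def listVar : List ℝ → ℕ
  | a :: b :: t => (if a * b < 0 then 1 else 0) + listVar (b :: t)
  | _ => 0

/-- `var v` : the number of sign changes of `v`, ignoring zero entries. -/
noncomputable def var {n : ℕ} (v : Fin n → ℝ) : ℕ :=
  listVar ((List.ofFn v).filter (fun x => x ≠ 0))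

/-- `varbar v` : the maximum of `var w` over all `w` agreeing with `v` on the
nonzero entries of `v`. -/
noncomputable def varbar {n : ℕ} (v : Fin n → ℝ) : ℕ :=
  sSup {m | ∃ w : Fin n → ℝ, (∀ i, v i ≠ 0 → w i = v i) ∧ var w = m}

/-- `altv v = (v 0, -v 1, v 2, ...)`. -/
def altv {n : ℕ} (v : Fin n → ℝ) : Fin n → ℝ := fun i => (-1 : ℝ) ^ (i : ℕ) * v i

/-- A vector with entries in `{0, 1, -1}`, representing a sign vector. -/
def IsSignVec {n : ℕ} (σ : Fin n → ℝ) : Prop := ∀ i, σ i = 0 ∨ σ i = 1 ∨ σ i = -1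

noncomputable def F (l : List ℝ) : List ℝ := l.filter (fun x => x ≠ 0)

lemma F_nil : F [] = [] := rfl
lemma F_cons_zero (t : List ℝ) : F ((0:ℝ) :: t) = F t := by simp [F]
lemma F_cons_ne {x : ℝ} (hx : x ≠ 0) (t : List ℝ) : F (x :: t) = x :: F t := by
  simp [F, hx]

lemma listVar_cons_cons' (a b : ℝ) (t : List ℝ) :
    listVar (a :: b :: t) = (if a * b < 0 then 1 else 0) + listVar (b :: t) := rfl

noncomputable def g (l : List ℝ) : ℕ := listVar (F l)
noncomputable def h (s : ℝ) (l : List ℝ) : ℕ := listVar (s :: F l)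

lemma listVar_le_cons (x : ℝ) (m : List ℝ) : listVar m ≤ listVar (x :: m) := by
  cases m with
  | nil => exact le_refl _
  | cons b t => rw [listVar_cons_cons']; omega

lemma g_le_h (s : ℝ) (l : List ℝ) : g l ≤ h s l := listVar_le_cons s (F l)

lemma h_le_g (s : ℝ) (l : List ℝ) : h s l ≤ g l + 1 := by
  unfold h g
  cases hF : F l with
  | nil => simp [listVar]
  | cons a t => rw [listVar_cons_cons']; split <;> omega

lemma sgn_trans {a b c : ℝ} (h1 : a * b > 0) (h2 : b * c < 0) : a * c < 0 := by
  nlinarith [sq_nonneg b, mul_self_nonneg (a*c)]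

lemma sgn_iff {a b c : ℝ} (h1 : a * b > 0) : a * c < 0 ↔ b * c < 0 := by
  constructor <;> intro h
  · exact sgn_trans (by linarith [mul_comm a b] : b * a > 0) h
  · exact sgn_trans h1 h

lemma h_sign {s s' : ℝ} (hs : s * s' > 0) (l : List ℝ) : h s l = h s' l := by
  unfold h
  cases hF : F l with
  | nil => rfl
  | cons a t =>
    rw [listVar_cons_cons', listVar_cons_cons']
    congr 1
    simp only [sgn_iff hs]


lemma g_cons_zero (t : List ℝ) : g ((0:ℝ) :: t) = g t := by rw [g, F_cons_zero]; rfl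
lemma g_cons_ne {x : ℝ} (hx : x ≠ 0) (t : List ℝ) : g (x :: t) = h x t := by
  rw [g, F_cons_ne hx]; rfl
lemma h_cons_zero (s : ℝ) (t : List ℝ) : h s ((0:ℝ) :: t) = h s t := by
  rw [h, F_cons_zero]; rfl
lemma h_cons_ne (s : ℝ) {x : ℝ} (hx : x ≠ 0) (t : List ℝ) :
    h s (x :: t) = (if s * x < 0 then 1 else 0) + h x t := by
  rw [h, F_cons_ne hx, listVar_cons_cons']; rfl

lemma var_mono_aux : ∀ (b a : List ℝ), List.Forall₂ (fun x y => y ≠ 0 → x * y > 0) a b →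
    g b ≤ g a ∧ ∀ s : ℝ, s ≠ 0 → h s b ≤ h s a := by
  intro b
  induction b with
  | nil =>
    intro a hab
    cases hab
    exact ⟨le_refl _, fun s _ => le_refl _⟩
  | cons y b' ih =>
    intro a hab
    cases hab with
    | cons hxy hab' =>
      rename_i x a'
      obtain ⟨ih1, ih2⟩ := ih a' hab'
      by_cases hy : y = 0
      · subst hy
        have ha : g a' ≤ g (x :: a') := by
          by_cases hx : x = 0
          · subst hx; rw [g_cons_zero]
          · rw [g_cons_ne hx]; exact g_le_h x a'
        refine ⟨by rw [g_cons_zero]; exact le_trans ih1 ha, ?_⟩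
        intro s hs
        rw [h_cons_zero]
        by_cases hx : x = 0
        · subst hx; rw [h_cons_zero]; exact ih2 s hs
        · rw [h_cons_ne s hx]
          by_cases hsx : s * x > 0
          · calc h s b' ≤ h s a' := ih2 s hs
              _ = h x a' := h_sign hsx a'
              _ ≤ _ := by omega
          · calc h s b' ≤ g b' + 1 := h_le_g s b'
              _ ≤ g a' + 1 := by omega
              _ ≤ h x a' + 1 := by have := g_le_h x a'; omega
              _ ≤ _ := by
                  have hsx' : s * x < 0 := by
                    rcases lt_trichotomy (s * x) 0 with h'|h'|h'
                    · exact h'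
                    · exact absurd (mul_eq_zero.mp h') (by push_neg; exact ⟨hs, hx⟩)
                    · exact absurd h' hsx
                  simp [hsx']
      · have hxy' : x * y > 0 := hxy hy
        have hx : x ≠ 0 := by rintro rfl; simp at hxy'
        have hyx : y * x > 0 := by linarith [mul_comm x y]
        have key : h y b' ≤ h x a' := le_trans (ih2 y hy) (le_of_eq (h_sign hyx a'))
        refine ⟨by rw [g_cons_ne hy, g_cons_ne hx]; exact key, ?_⟩
        intro s hs
        rw [h_cons_ne s hy, h_cons_ne s hx]
        have hiff : s * y < 0 ↔ s * x < 0 := by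
          rw [mul_comm s y, mul_comm s x]
          exact ⟨fun hh => (sgn_iff hxy').mpr hh, fun hh => (sgn_iff hxy').mp hh⟩
        simp only [hiff]
        omega

lemma var_eq_g {n : ℕ} (v : Fin n → ℝ) : var v = g (List.ofFn v) := rfl

lemma altv_altv {n : ℕ} (v : Fin n → ℝ) : altv (altv v) = v := by
  funext i
  simp [altv, ← mul_assoc, ← mul_pow]

def altL : List ℝ → List ℝ
  | [] => []
  | a :: t => a :: (altL t).map (fun x => -x)

lemma altL_ofFn : ∀ {n : ℕ} (v : Fin n → ℝ), List.ofFn (altv v) = altL (List.ofFn v) := by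
  intro n
  induction n with
  | zero => intro v; simp [altL]
  | succ m ih =>
    intro v
    rw [List.ofFn_succ, List.ofFn_succ, altL]
    have h0 : altv v 0 = v 0 := by simp [altv]
    have h1 : (fun i : Fin m => altv v i.succ) = fun i => -(altv (fun j : Fin m => v j.succ) i) := by
      funext i
      simp [altv, pow_succ]
    rw [h0, h1, ← ih (fun j : Fin m => v j.succ), List.map_ofFn]
    rfl

lemma altL_cons_cons (a b : ℝ) (t : List ℝ) :
    altL (a :: b :: t) = a :: -b :: altL t := by
  show a :: (altL (b :: t)).map _ = _
  rw [altL]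
  simp [List.map_map, Function.comp]

lemma listVar_map_neg (l : List ℝ) : listVar (l.map (fun x => -x)) = listVar l := by
  induction l with
  | nil => rfl
  | cons a t ih =>
    cases t with
    | nil => rfl
    | cons b t' =>
      simp only [List.map_cons] at ih ⊢
      rw [listVar_cons_cons', listVar_cons_cons', ih]
      congr 1
      simp [neg_mul_neg]

lemma altL_alternating : ∀ l : List ℝ, (∀ x ∈ l, x ≠ 0) → l ≠ [] →
    listVar l + listVar (altL l) + 1 = l.length := by
  intro l
  induction l with
  | nil => intro _ hne; exact absurd rfl hne
  | cons a t ih =>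
    intro hnz _
    cases t with
    | nil => simp [listVar, altL]
    | cons b t' =>
      have hab : a * b ≠ 0 := mul_ne_zero (hnz a (by simp)) (hnz b (by simp))
      have h2 : listVar (altL (a :: b :: t')) = (if a * (-b) < 0 then 1 else 0) + listVar (altL (b :: t')) := by
        rw [altL_cons_cons, listVar_cons_cons']
        congr 1
        have : -b :: altL t' = (altL (b :: t')).map (fun x => -x) := by
          rw [altL]
          simp [List.map_map, Function.comp]
        rw [this, listVar_map_neg]
      have ihh := ih (fun x hx => hnz x (by simp [hx])) (by simp)
      rw [listVar_cons_cons', h2]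
      have : (if a * b < 0 then 1 else 0) + (if a * (-b) < 0 then 1 else 0) = 1 := by
        rcases lt_trichotomy (a*b) 0 with h'|h'|h'
        · have hn : ¬ a * (-b) < 0 := by nlinarith
          simp [h', hn]
          linarith
        · exact absurd h' hab
        · have hneg : a * (-b) < 0 := by nlinarith
          have hn : ¬ a * b < 0 := not_lt.mpr (le_of_lt h')
          simp [hneg, hn]
          linarith
      simp only [List.length_cons] at ihh ⊢
      omega

lemma F_eq_self {l : List ℝ} (h : ∀ x ∈ l, x ≠ 0) : F l = l := by
  rw [F, List.filter_eq_self]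
  intro a ha
  simpa using h a ha

lemma altL_ne_zero : ∀ l : List ℝ, (∀ x ∈ l, x ≠ 0) → ∀ x ∈ altL l, x ≠ 0 := by
  intro l
  induction l with
  | nil => intro _ x hx; simp [altL] at hx
  | cons a t ih =>
    intro hl x hx
    rw [altL] at hx
    rcases List.mem_cons.mp hx with rfl | hx'
    · exact hl x (by simp)
    · obtain ⟨y, hy, rfl⟩ := List.mem_map.mp hx'
      have := ih (fun z hz => hl z (by simp [hz])) y hy
      simpa using this

lemma var_add_var_altv {n : ℕ} (w : Fin n → ℝ) (hw : ∀ i, w i ≠ 0) (hn : 1 ≤ n) :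
    var w + var (altv w) + 1 = n := by
  have hl : ∀ x ∈ List.ofFn w, x ≠ 0 := by
    intro x hx
    obtain ⟨i, rfl⟩ := by simpa [List.mem_ofFn] using hx
    exact hw i
  have h1 : var w = listVar (List.ofFn w) := by
    rw [var_eq_g, g, F_eq_self hl]
  have h2 : var (altv w) = listVar (altL (List.ofFn w)) := by
    rw [var_eq_g, g, altL_ofFn, F_eq_self (altL_ne_zero _ hl)]
  have h3 := altL_alternating (List.ofFn w) hl (by
    cases n with
    | zero => omega
    | succ m => rw [List.ofFn_succ]; simp)
  rw [h1, h2, h3, List.length_ofFn]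

lemma forall₂_ofFn {n : ℕ} (R : ℝ → ℝ → Prop) (f g' : Fin n → ℝ) (h : ∀ i, R (f i) (g' i)) :
    List.Forall₂ R (List.ofFn f) (List.ofFn g') := by
  rw [List.forall₂_iff_get]
  refine ⟨by simp, ?_⟩
  intro i h1 h2
  rw [List.get_ofFn, List.get_ofFn]
  exact h _

lemma var_mono {n : ℕ} (a b : Fin n → ℝ) (h : ∀ i, b i ≠ 0 → a i * b i > 0) :
    var b ≤ var a := by
  rw [var_eq_g, var_eq_g]
  exact (var_mono_aux (List.ofFn b) (List.ofFn a)
    (forall₂_ofFn _ _ _ (fun i => h i))).1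

lemma listVar_le (l : List ℝ) : listVar l + 1 ≤ l.length ∨ l = [] := by
  induction l with
  | nil => right; rfl
  | cons a t ih =>
    left
    cases t with
    | nil => simp [listVar]
    | cons b t' =>
      rcases ih with h | h
      · rw [listVar_cons_cons']; simp at h ⊢; split <;> omega
      · simp at h

lemma var_upper {n : ℕ} (v : Fin n → ℝ) : var v + 1 ≤ n ∨ n = 0 := by
  cases n with
  | zero => right; rfl
  | succ m =>
    left
    rw [var_eq_g, g]
    rcases listVar_le (F (List.ofFn v)) with h | h
    · calc listVar (F (List.ofFn v)) + 1 ≤ (F (List.ofFn v)).length := h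
        _ ≤ (List.ofFn v).length := List.length_filter_le _ _
        _ = m + 1 := List.length_ofFn
    · rw [h]; simp [listVar]


noncomputable def fill : ℝ → List ℝ → List ℝ
  | _, [] => []
  | c, x :: t => if x = 0 then c :: fill c t else x :: fill x t

lemma fill_length : ∀ (c : ℝ) (l : List ℝ), (fill c l).length = l.length := by
  intro c l
  induction l generalizing c with
  | nil => rfl
  | cons x t ih => rw [fill]; split <;> simp [ih]

lemma fill_ne_zero : ∀ (l : List ℝ) (c : ℝ), c ≠ 0 → ∀ x ∈ fill c l, x ≠ 0 := by
  intro l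
  induction l with
  | nil => intro c _ x hx; simp [fill] at hx
  | cons y t ih =>
    intro c hc x hx
    rw [fill] at hx
    split at hx
    · rcases List.mem_cons.mp hx with rfl | hx'
      · exact hc
      · exact ih c hc x hx'
    · rcases List.mem_cons.mp hx with rfl | hx'
      · assumption
      · exact ih y (by assumption) x hx'

lemma fill_forall₂ : ∀ (l : List ℝ) (c : ℝ),
    List.Forall₂ (fun x y => x ≠ 0 → y = x) l (fill c l) := by
  intro l
  induction l with
  | nil => intro c; exact List.Forall₂.nil
  | cons x t ih =>
    intro c
    rw [fill]
    split
    · rename_i hx; subst hx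
      exact List.Forall₂.cons (fun hc => absurd rfl hc) (ih c)
    · exact List.Forall₂.cons (fun _ => rfl) (ih x)

lemma fill_var : ∀ (l : List ℝ) (c : ℝ), c ≠ 0 →
    listVar (c :: fill c l) = listVar (c :: F l) := by
  intro l
  induction l with
  | nil => intro c _; rfl
  | cons x t ih =>
    intro c hc
    rw [fill]
    by_cases hx : x = 0
    · subst hx
      rw [if_pos rfl]
      rw [listVar_cons_cons', ih c hc, F_cons_zero]
      have : ¬ c * c < 0 := by nlinarith
      simp [this]
    · simp only [if_neg hx]
      rw [listVar_cons_cons', ih x hx, F_cons_ne hx, listVar_cons_cons']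

lemma fill_head : ∀ (l : List ℝ) (c : ℝ), (F l).head? = some c →
    (fill c l).head? = some c := by
  intro l
  induction l with
  | nil => intro c hc; simp [F] at hc
  | cons x t ih =>
    intro c hc
    by_cases hx : x = 0
    · subst hx
      rw [fill]; simp
    · rw [F_cons_ne hx] at hc
      simp at hc
      rw [fill, if_neg hx]
      simp [hc]

lemma fill_var' (l : List ℝ) (c : ℝ) (hc : c ≠ 0) (hh : (F l).head? = some c) :
    listVar (fill c l) = listVar (F l) := by
  obtain ⟨m', hm'⟩ : ∃ m', fill c l = c :: m' := by
    have := fill_head l c hh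
    cases hfl : fill c l with
    | nil => rw [hfl] at this; simp at this
    | cons a t => rw [hfl] at this; simp at this; exact ⟨t, by rw [this]⟩
  obtain ⟨r, hr⟩ : ∃ r, F l = c :: r := by
    cases hFl : F l with
    | nil => rw [hFl] at hh; simp at hh
    | cons a t => rw [hFl] at hh; simp at hh; exact ⟨t, by rw [hh]⟩
  have h1 : listVar (c :: fill c l) = listVar (fill c l) := by
    rw [hm', listVar_cons_cons']
    have : ¬ c * c < 0 := by nlinarith
    simp [this]
  have h2 : listVar (c :: F l) = listVar (F l) := by
    rw [hr, listVar_cons_cons']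
    have : ¬ c * c < 0 := by nlinarith
    simp [this]
  rw [← h1, ← h2, fill_var l c hc]

lemma varbar_eq {n : ℕ} (v : Fin n → ℝ) (hv : ∃ i, v i ≠ 0) :
    varbar v + var (altv v) + 1 = n := by
  obtain ⟨i0, hi0⟩ := hv
  have hn : 1 ≤ n := by have := i0.isLt; omega
  set t : Fin n → ℝ := altv v with ht
  set lt : List ℝ := List.ofFn t with hlt
  -- F lt is nonempty
  obtain ⟨c, r, hcr⟩ : ∃ c r, F lt = c :: r := by
    cases hFl : F lt with
    | nil =>
      exfalso
      have hmem : t i0 ∈ F lt := by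
        rw [F, List.mem_filter]
        constructor
        · rw [hlt, List.mem_ofFn]; exact ⟨i0, rfl⟩
        · simp only [decide_eq_true_eq]
          show t i0 ≠ 0
          rw [ht]
          exact mul_ne_zero (by positivity) hi0
      rw [hFl] at hmem; simp at hmem
    | cons a s => exact ⟨a, s, rfl⟩
  have hc0 : c ≠ 0 := by
    have : c ∈ F lt := by rw [hcr]; simp
    rw [F, List.mem_filter] at this
    simpa using this.2
  -- the filled list
  set m : List ℝ := fill c lt with hm
  have hlen : m.length = n := by rw [hm, fill_length, hlt, List.length_ofFn]
  set t' : Fin n → ℝ := fun i => m.get (Fin.cast hlen.symm i) with ht'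
  have hofn : List.ofFn t' = m := by
    apply List.ext_get
    · simp [hlen]
    · intro j h1 h2
      rw [List.get_ofFn]
      rfl
  have hmnz : ∀ i, t' i ≠ 0 := by
    intro i
    exact fill_ne_zero lt c hc0 _ (List.get_mem _ _)
  set w : Fin n → ℝ := altv t' with hw
  have hwt' : altv w = t' := by rw [hw, altv_altv]
  have hwnz : ∀ i, w i ≠ 0 := by
    intro i
    simp only [hw, altv]
    exact mul_ne_zero (by positivity) (hmnz i)
  -- var t' = var t
  have hvt : var t' = var t := by
    rw [var_eq_g, var_eq_g, hofn, g, g, F_eq_self (fill_ne_zero lt c hc0)]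
    exact fill_var' lt c hc0 (by rw [hcr]; rfl)
  have hsum : var w + var t + 1 = n := by
    have := var_add_var_altv w hwnz hn
    rw [hwt', hvt] at this
    exact this
  -- w is a completion of v
  have hcompl : ∀ i, v i ≠ 0 → w i = v i := by
    intro i hvi
    have hti : t i ≠ 0 := by
      rw [ht]
      exact mul_ne_zero (by positivity) hvi
    have hfa := fill_forall₂ lt c
    rw [List.forall₂_iff_get] at hfa
    have hi1 : (i : ℕ) < lt.length := by simp [hlt]
    have hi2 : (i : ℕ) < m.length := by rw [hlen]; exact i.isLt
    have hltget : lt.get ⟨(i : ℕ), hi1⟩ = t i := by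
      show (List.ofFn t).get ⟨(i : ℕ), hi1⟩ = t i
      rw [List.get_ofFn]
      rfl
    have hget := hfa.2 (i : ℕ) hi1 hi2
    have hlt0 : lt.get ⟨(i : ℕ), hi1⟩ ≠ 0 := by rw [hltget]; exact hti
    have ht'i : t' i = t i := by
      calc t' i = m.get ⟨(i : ℕ), hi2⟩ := rfl
        _ = lt.get ⟨(i : ℕ), hi1⟩ := hget hlt0
        _ = t i := hltget
    have hwi : w i = (-1 : ℝ) ^ (i : ℕ) * t' i := rfl
    rw [hwi, ht'i, ht]
    show (-1 : ℝ) ^ (i : ℕ) * ((-1 : ℝ) ^ (i : ℕ) * v i) = v i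
    rw [← mul_assoc, ← mul_pow]
    simp
  -- upper bound for any completion
  have hub : ∀ x ∈ {m | ∃ u : Fin n → ℝ, (∀ i, v i ≠ 0 → u i = v i) ∧ var u = m},
      x + var t + 1 ≤ n := by
    rintro x ⟨u, hu, rfl⟩
    set u' : Fin n → ℝ := fun i => if u i = 0 then 1 else u i with hu'
    have hu'nz : ∀ i, u' i ≠ 0 := by
      intro i
      rw [hu']
      dsimp only
      split
      · exact one_ne_zero
      · assumption
    have hu'eq : ∀ i, u i ≠ 0 → u' i = u i := by
      intro i hui
      rw [hu']
      dsimp only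
      rw [if_neg hui]
    have h1 : var u ≤ var u' := by
      apply var_mono
      intro i hui
      rw [hu'eq i hui]
      exact mul_self_pos.mpr hui
    have h2 : var t ≤ var (altv u') := by
      apply var_mono
      intro i hti
      have hvi : v i ≠ 0 := by
        intro hv0
        apply hti
        rw [ht]
        show (-1 : ℝ) ^ (i : ℕ) * v i = 0
        rw [hv0, mul_zero]
      have hui : u i = v i := hu i hvi
      have hu'i : u' i = v i := by rw [hu'eq i (by rw [hui]; exact hvi), hui]
      show ((-1 : ℝ) ^ (i : ℕ) * u' i) * t i > 0
      rw [ht, hu'i]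
      show ((-1 : ℝ) ^ (i : ℕ) * v i) * ((-1 : ℝ) ^ (i : ℕ) * v i) > 0
      apply mul_self_pos.mpr
      exact mul_ne_zero (by positivity) hvi
    have h3 := var_add_var_altv u' hu'nz hn
    omega
  -- conclude
  have hne : {m | ∃ u : Fin n → ℝ, (∀ i, v i ≠ 0 → u i = v i) ∧ var u = m}.Nonempty :=
    ⟨var w, w, hcompl, rfl⟩
  have hbdd : BddAbove {m | ∃ u : Fin n → ℝ, (∀ i, v i ≠ 0 → u i = v i) ∧ var u = m} :=
    ⟨n - var t - 1, fun x hx => by have := hub x hx; omega⟩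
  have hsup : varbar v = n - var t - 1 := by
    apply le_antisymm
    · exact csSup_le hne (fun x hx => by have := hub x hx; omega)
    · apply le_csSup hbdd
      exact ⟨w, hcompl, by omega⟩
  omega

lemma extract {α : Type*} (f : α → ℝ) : ∀ (l : List α), (∀ x ∈ l, f x ≠ 0) →
    ∀ r : ℕ, r ≤ listVar (l.map f) → l ≠ [] →
    ∃ l', List.Sublist l' l ∧ l'.head? = l.head? ∧ l'.length = r + 1 ∧
      l'.Chain' (fun i j => f i * f j < 0) := by
  intro l
  induction l with
  | nil => intro _ r _ hne; exact absurd rfl hne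
  | cons a t ih =>
    intro hnz r hr _
    cases t with
    | nil =>
      simp [listVar] at hr
      subst hr
      exact ⟨[a], List.Sublist.refl _, rfl, rfl, List.isChain_singleton a⟩
    | cons b t' =>
      cases r with
      | zero => exact ⟨[a], by simp, rfl, rfl, List.isChain_singleton a⟩
      | succ r' =>
        have hmap : (a :: b :: t').map f = f a :: f b :: t'.map f := rfl
        rw [hmap, listVar_cons_cons'] at hr
        have hnzbt : ∀ x ∈ b :: t', f x ≠ 0 := fun x hx => hnz x (by simp [hx])
        by_cases hab : f a * f b < 0
        · rw [if_pos hab] at hr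
          obtain ⟨l'', hsub, hhead, hlen, hchain⟩ :=
            ih hnzbt r' (by rw [List.map_cons]; omega) (by simp)
          refine ⟨a :: l'', List.Sublist.cons₂ a hsub, rfl, by simp [hlen], ?_⟩
          rw [List.Chain', List.isChain_cons]
          refine ⟨?_, hchain⟩
          intro y hy
          rw [hhead] at hy
          simp at hy
          subst hy
          exact hab
        · rw [if_neg hab] at hr
          obtain ⟨l'', hsub, hhead, hlen, hchain⟩ :=
            ih hnzbt (r' + 1) (by rw [List.map_cons]; omega) (by simp)
          -- l'' = b :: c :: rest
          obtain ⟨c, rest, hl''⟩ : ∃ c rest, l'' = b :: c :: rest := by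
            cases l'' with
            | nil => simp at hlen
            | cons x s =>
              simp at hhead
              subst hhead
              cases s with
              | nil => simp at hlen
              | cons c rest => exact ⟨c, rest, rfl⟩
          subst hl''
          have hbc : f b * f c < 0 := (List.isChain_cons_cons.mp hchain).1
          have hfa : f a ≠ 0 := hnz a (by simp)
          have hfb : f b ≠ 0 := hnz b (by simp)
          have hab' : f a * f b > 0 := by
            rcases lt_trichotomy (f a * f b) 0 with h'|h'|h'
            · exact absurd h' hab
            · exact absurd (mul_eq_zero.mp h') (by push_neg; exact ⟨hfa, hfb⟩)
            · exact h'
          have hac : f a * f c < 0 := sgn_trans hab' hbc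
          refine ⟨a :: c :: rest, ?_, rfl, by simpa using hlen, ?_⟩
          · apply List.Sublist.cons₂ a
            have : List.Sublist (c :: rest) t' := (List.cons_sublist_cons.mp hsub)
            exact this.cons b
          · rw [List.Chain', List.isChain_cons_cons]
            exact ⟨hac, (List.isChain_cons_cons.mp hchain).2⟩

lemma listVar_chain : ∀ l : List ℝ, l.Chain' (fun x y => x * y < 0) →
    listVar l + 1 = l.length ∨ l = [] := by
  intro l
  induction l with
  | nil => intro _; right; rfl
  | cons a t ih =>
    intro hch
    left
    cases t with
    | nil => rfl
    | cons b t' =>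
      have h1 := List.isChain_cons_cons.mp ‹_›
      rcases ih h1.2 with h | h
      · rw [listVar_cons_cons', if_pos h1.1]
        simp at h ⊢
        omega
      · simp at h

lemma filter_mem_sorted {n : ℕ} (Q : List (Fin n)) (hQ : Q.Pairwise (· < ·)) :
    (List.finRange n).filter (fun i => decide (i ∈ Q)) = Q := by
  refine (fun hp h1 h2 => List.Perm.eq_of_pairwise' (r := (· ≤ ·)) h1 h2 hp) ?_ ?_ ?_
  · apply List.perm_of_nodup_nodup_toFinset_eq
    · exact (List.nodup_finRange n).filter _
    · exact hQ.imp (fun h => ne_of_lt h)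
    · ext x
      simp [List.mem_filter]
  · exact List.Pairwise.sublist List.filter_sublist
      ((List.pairwise_lt_finRange n).imp le_of_lt)
  · exact hQ.imp le_of_lt

theorem stmt10 (n k : ℕ) (hkn : k < n) (σ : Fin n → ℝ) (hσ : IsSignVec σ)
    (hσ0 : σ ≠ 0) (hσv : varbar σ < k) :
    ∃ τ : Fin n → ℝ, IsSignVec τ ∧ τ ≠ 0 ∧ (∀ i, τ i ≠ 0 → τ i = σ i) ∧ varbar τ = k ∧
      (∀ i : Fin n, (∀ j, j < i → τ j = 0) → τ i ≠ 0 → 0 < (-1 : ℝ) ^ (i : ℕ) * τ i) := by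
  obtain ⟨i0, hi0⟩ : ∃ i, σ i ≠ 0 := by
    by_contra hc
    push_neg at hc
    exact hσ0 (funext fun i => hc i)
  set u : Fin n → ℝ := altv σ with hu
  have hu0 : ∀ i, u i ≠ 0 ↔ σ i ≠ 0 := by
    intro i
    constructor
    · intro h hc; exact h (by rw [hu]; show (-1:ℝ)^(i:ℕ) * σ i = 0; rw [hc, mul_zero])
    · intro h; exact mul_ne_zero (by positivity) h
  have hdual := varbar_eq σ ⟨i0, hi0⟩
  have hk1 : 1 ≤ k := by omega
  have hvaru : n - k ≤ var (altv σ) := by omega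
  -- the support list
  set P : List (Fin n) := (List.finRange n).filter (fun i => decide (u i ≠ 0)) with hP
  have hPnz : ∀ x ∈ P, u x ≠ 0 := by
    intro x hx
    rw [hP, List.mem_filter] at hx
    simpa using hx.2
  have hPne : P ≠ [] := by
    intro hc
    have : i0 ∈ P := by
      rw [hP, List.mem_filter]
      exact ⟨List.mem_finRange i0, by simpa using (hu0 i0).mpr hi0⟩
    rw [hc] at this
    simp at this
  have hPvar : listVar (P.map u) = var u := by
    rw [var_eq_g, g, F, List.ofFn_eq_map, List.filter_map]
    congr 1
  obtain ⟨l', hsub, hhead, hlen, hchain⟩ :=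
    extract u P hPnz (n - k) (by rw [hPvar]; exact hvaru) hPne
  -- l' has length n - k + 1 ≥ 2
  obtain ⟨q0, q1, rest, hl'⟩ : ∃ q0 q1 rest, l' = q0 :: q1 :: rest := by
    cases l' with
    | nil => simp at hlen
    | cons x s =>
      cases s with
      | nil => simp at hlen; omega
      | cons y r => exact ⟨x, y, r, rfl⟩
  subst hl'
  have hq01 : u q0 * u q1 < 0 := (List.isChain_cons_cons.mp hchain).1
  have hq0nz : u q0 ≠ 0 := hPnz q0 (hsub.subset (by simp))
  -- choose Q with positive head
  obtain ⟨Q, hQsub, hQlen, hQchain, q, hQhead, hq⟩ :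
      ∃ Q : List (Fin n), List.Sublist Q P ∧ Q.length = n - k ∧
        Q.Chain' (fun i j => u i * u j < 0) ∧ ∃ q, Q = q :: Q.tail ∧ 0 < u q := by
    rcases lt_trichotomy (u q0) 0 with hneg | hzero | hpos
    · refine ⟨q1 :: rest, ?_, by simpa using hlen, (List.isChain_cons_cons.mp hchain).2,
        q1, rfl, by nlinarith⟩
      exact List.Sublist.trans (List.sublist_cons_self q0 (q1 :: rest)) hsub
    · exact absurd hzero hq0nz
    · refine ⟨(q0 :: q1 :: rest).take (n - k), ?_, ?_, hchain.take _, q0, ?_, hpos⟩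
      · exact List.Sublist.trans (List.take_sublist _ _) hsub
      · rw [List.length_take]
        simp at hlen ⊢
        omega
      · have hnk : 1 ≤ n - k := by omega
        cases hnk' : n - k with
        | zero => omega
        | succ d => simp [List.take]
  have hQP : Q.Pairwise (· < ·) :=
    List.Pairwise.sublist hQsub (List.Pairwise.sublist List.filter_sublist
      (List.pairwise_lt_finRange n))
  have hQnz : ∀ x ∈ Q, u x ≠ 0 := fun x hx => hPnz x (hQsub.subset hx)
  have hqQ : q ∈ Q := by rw [hQhead]; simp
  -- define τ
  set τ' : Fin n → ℝ := fun i => if i ∈ Q then u i else 0 with hτ'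
  set τ : Fin n → ℝ := altv τ' with hτ
  have hττ' : ∀ i, τ i = (-1 : ℝ) ^ (i : ℕ) * τ' i := fun i => rfl
  have haltτ : altv τ = τ' := by rw [hτ, altv_altv]
  have hτ'mem : ∀ i, i ∈ Q → τ' i = u i := by
    intro i hi
    rw [hτ']
    exact if_pos hi
  have hτ'nmem : ∀ i, i ∉ Q → τ' i = 0 := by
    intro i hi
    rw [hτ']
    exact if_neg hi
  have hτσ : ∀ i, i ∈ Q → τ i = σ i := by
    intro i hi
    rw [hττ', hτ'mem i hi, hu]
    show (-1 : ℝ) ^ (i : ℕ) * ((-1 : ℝ) ^ (i : ℕ) * σ i) = σ i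
    rw [← mul_assoc, ← mul_pow]
    simp
  have hτ0 : ∀ i, i ∉ Q → τ i = 0 := by
    intro i hi
    rw [hττ', hτ'nmem i hi, mul_zero]
  have hτq : τ q ≠ 0 := by
    rw [hτσ q hqQ, ← (hu0 q)]
    exact ne_of_gt hq
  -- var τ' = n - k - 1
  have hvarτ' : var τ' = n - k - 1 := by
    have hofn : List.ofFn τ' = (List.finRange n).map τ' := List.ofFn_eq_map
    have hfQ : (List.finRange n).filter (fun i => decide (τ' i ≠ 0)) = Q := by
      rw [← filter_mem_sorted Q hQP]
      apply List.filter_congr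
      intro x _
      simp only [decide_eq_decide]
      constructor
      · intro hne
        by_contra hc
        exact hne (hτ'nmem x hc)
      · intro hx
        rw [hτ'mem x hx]
        exact hQnz x hx
    have : var τ' = listVar (Q.map τ') := by
      rw [var_eq_g, g, F, hofn, List.filter_map]
      have hcomp : ((fun x => decide (x ≠ 0)) ∘ τ') = (fun i => decide (τ' i ≠ 0)) := rfl
      rw [hcomp, hfQ]
    rw [this, List.map_congr_left (fun x hx => hτ'mem x hx)]
    rcases listVar_chain (Q.map u) (List.isChain_map_of_isChain u (fun a b h => h) hQchain) with h | h
    · rw [List.length_map, hQlen] at h; omega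
    · exfalso
      have : Q = [] := by simpa using h
      rw [this] at hQlen
      simp at hQlen
      omega
  refine ⟨τ, ?_, ?_, ?_, ?_, ?_⟩
  · intro i
    by_cases hi : i ∈ Q
    · rw [hτσ i hi]; exact hσ i
    · left; exact hτ0 i hi
  · intro hc
    exact hτq (by rw [hc]; rfl)
  · intro i hi
    by_cases hiQ : i ∈ Q
    · exact hτσ i hiQ
    · exact absurd (hτ0 i hiQ) hi
  · have := varbar_eq τ ⟨q, hτq⟩
    rw [haltτ, hvarτ'] at this
    omega
  · intro i hpre hine
    have hiQ : i ∈ Q := by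
      by_contra hc
      exact hine (hτ0 i hc)
    have hiq : i = q := by
      rcases lt_trichotomy i q with h'|h'|h'
      · -- i < q but q is min of Q
        exfalso
        rw [hQhead] at hiQ
        rcases List.mem_cons.mp hiQ with rfl | hmem
        · exact lt_irrefl i h'
        · have : q < i := by
            rw [hQhead] at hQP
            exact (List.pairwise_cons.mp hQP).1 i hmem
          omega
      · exact h'
      · exact absurd (hpre q h') hτq
    subst hiq
    rw [hττ' i, ← mul_assoc, ← mul_pow, hτ'mem i hiQ]
    simpa using hq
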